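/- arXiv:2412.02584 — 3 statements merged into one kernel-verified Lean document; each statement's English description precedes it below -/
import Mathlib

section
/- For every n ≥ 1, the cover graph G(L(Q_n)) of the face lattice of the n-dimensional hypercube has a Hamiltonian cycle. -/
/-!
The cover graph of the face lattice of the hypercube `Q_n`.
Faces are encoded by ternary strings over `Fin 3`, with `0 ↦ '0'`, `1 ↦ '1'`, `2 ↦ '-'`;
the extra vertex `none` plays the role of the empty face `⊥`.
-/

/-- Base relation of the cover graph of `L(Q_n)`: two ternary strings are related if
they agree in all but exactly one position, where one of them has `-` (encoded `2`)
and the other has `0` or `1`; the empty face `none` is related to exactly the strings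
containing no `-`. -/
def cubeFaceRel (n : ℕ) (u v : Option (Fin n → Fin 3)) : Prop :=
  match u, v with
  | some x, some y =>
      ∃ i : Fin n, x i ≠ y i ∧ (x i = 2 ∨ y i = 2) ∧ ∀ j : Fin n, j ≠ i → x j = y j
  | none, some y => ∀ i : Fin n, y i ≠ 2
  | _, _ => False

/-- The cover graph `G(L(Q_n))` of the face lattice of the hypercube. -/
def cubeFaceGraph (n : ℕ) : SimpleGraph (Option (Fin n → Fin 3)) :=
  SimpleGraph.fromRel (cubeFaceRel n)

/-!
Between nonempty faces the adjacency acts coordinatewise along the path `0 – 2 – 1` (`2` is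
`-`), so the nonempty faces form the grid `P₃ⁿ`. Listing `{0, 2, 1}ⁿ` boustrophedon-style (first
letter `0`, then `2` with the remaining letters in reverse order, then `1`) gives a Hamiltonian
path of this grid from `0ⁿ` to `1ⁿ`. Neither end contains a `-`, so both are adjacent to `⊥`,
which closes the path into a Hamiltonian cycle; the ends differ because `n ≥ 1`.
-/

namespace SimpleGraph.Walk

variable {V : Type*} [DecidableEq V] {G : SimpleGraph V} {u v w : V}

theorem IsPath.isHamiltonianCycle_cons_concat {p : G.Walk u v} (hp : p.IsPath) (huv : u ≠ v)
    (hsupp : ∀ x, x ∈ p.support ↔ x ≠ w) (hwu : G.Adj w u) (hvw : G.Adj v w) :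
    (cons hwu (p.concat hvw)).IsHamiltonianCycle := by
  have hpath : (cons hwu (p.concat hvw)).tail.IsPath := by
    simpa using hp.concat (fun h => (hsupp w).1 h rfl) hvw
  refine ⟨isCycle_iff_isPath_tail_and_le_length.2 ⟨hpath, ?_⟩, hpath.isHamiltonian_of_mem ?_⟩
  · have : p.length ≠ 0 := fun h => huv (eq_of_length_eq_zero h)
    simp only [length_cons, length_concat]
    omega
  · intro x
    by_cases hx : x = w <;> simp [hx, hsupp x]

end SimpleGraph.Walk

theorem Fin.cons_const {n : ℕ} {α : Type*} (a : α) :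
    (Fin.cons a fun _ => a : Fin (n + 1) → α) = fun _ => a :=
  funext fun i => Fin.cases rfl (fun _ => rfl) i

def ternarySnake : (n : ℕ) → List (Fin n → Fin 3)
  | 0 => [Fin.elim0]
  | n + 1 =>
      (ternarySnake n).map (Fin.cons 0) ++ (ternarySnake n).reverse.map (Fin.cons 2) ++
        (ternarySnake n).map (Fin.cons 1)

theorem ternarySnake_ne_nil : ∀ n, ternarySnake n ≠ []
  | 0 => List.cons_ne_nil _ _
  | n + 1 => by simp [ternarySnake, ternarySnake_ne_nil n]

theorem mem_ternarySnake {n : ℕ} (x : Fin n → Fin 3) : x ∈ ternarySnake n := by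
  induction n with
  | zero => simp [ternarySnake, Subsingleton.elim x Fin.elim0]
  | succ n ih =>
    induction x using Fin.consCases with
    | cons a y => fin_cases a <;> simp [ternarySnake, ih]

theorem ternarySnake_nodup : ∀ n, (ternarySnake n).Nodup
  | 0 => List.nodup_singleton _
  | n + 1 => by
    have hblock (a : Fin 3) := (ternarySnake_nodup n).map
      (Fin.cons_right_injective (α := fun _ => Fin 3) a)
    simp only [ternarySnake, List.nodup_append, List.nodup_reverse, List.map_reverse]
    refine ⟨⟨hblock 0, hblock 2, by simp [Fin.cons_inj]⟩, hblock 1, ?_⟩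
    simp only [List.mem_append, List.mem_reverse, List.mem_map]
    rintro _ (⟨y, -, rfl⟩ | ⟨y, -, rfl⟩) _ ⟨z, -, rfl⟩ h <;> simp [Fin.cons_inj] at h

theorem ternarySnake_head? : ∀ n, (ternarySnake n).head? = some fun _ => 0
  | 0 => by simp [ternarySnake, Subsingleton.elim (Fin.elim0 : Fin 0 → Fin 3) fun _ => 0]
  | n + 1 => by simp [ternarySnake, List.head?_append, ternarySnake_head? n, Fin.cons_const]

theorem ternarySnake_getLast? : ∀ n, (ternarySnake n).getLast? = some fun _ => 1
  | 0 => by simp [ternarySnake, Subsingleton.elim (Fin.elim0 : Fin 0 → Fin 3) fun _ => 1]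
  | n + 1 => by
    simp [ternarySnake, List.getLast?_append, ternarySnake_getLast? n, Fin.cons_const]

theorem cubeFaceRel_some_cons {n : ℕ} (a : Fin 3) {x y : Fin n → Fin 3}
    (h : cubeFaceRel n (some x) (some y)) :
    cubeFaceRel (n + 1) (some (Fin.cons a x)) (some (Fin.cons a y)) := by
  obtain ⟨i, hne, htwo, hrest⟩ := h
  refine ⟨i.succ, by simpa using hne, by simpa using htwo, Fin.cases (by simp) fun j hj => ?_⟩
  simpa using hrest j (ne_of_apply_ne Fin.succ hj)

namespace cubeFaceGraph

variable {n : ℕ}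

theorem adj_some_cons (a : Fin 3) {x y : Fin n → Fin 3}
    (h : (cubeFaceGraph n).Adj (some x) (some y)) :
    (cubeFaceGraph (n + 1)).Adj (some (Fin.cons a x)) (some (Fin.cons a y)) := by
  obtain ⟨hne, hrel⟩ := (SimpleGraph.fromRel_adj _ _ _).1 h
  refine (SimpleGraph.fromRel_adj _ _ _).2
    ⟨?_, hrel.imp (cubeFaceRel_some_cons a) (cubeFaceRel_some_cons a)⟩
  simpa [Fin.cons_right_injective] using hne

theorem adj_some_cons_cons {a b : Fin 3} (hab : a ≠ b) (htwo : a = 2 ∨ b = 2)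
    (x : Fin n → Fin 3) :
    (cubeFaceGraph (n + 1)).Adj (some (Fin.cons a x)) (some (Fin.cons b x)) := by
  refine (SimpleGraph.fromRel_adj _ _ _).2 ⟨by simpa using hab, Or.inl ?_⟩
  exact ⟨0, by simpa using hab, by simpa using htwo, Fin.cases (by simp) fun j _ => by simp⟩

theorem adj_none_some_iff {x : Fin n → Fin 3} :
    (cubeFaceGraph n).Adj none (some x) ↔ ∀ i, x i ≠ 2 := by
  simp [cubeFaceGraph, cubeFaceRel]

theorem isChain_ternarySnake :
    ∀ n, (ternarySnake n).IsChain fun x y => (cubeFaceGraph n).Adj (some x) (some y)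
  | 0 => List.isChain_singleton _
  | n + 1 => by
    let R x y := (cubeFaceGraph (n + 1)).Adj (some x) (some y)
    have hblock (a : Fin 3) : ((ternarySnake n).map (Fin.cons a)).IsChain R :=
      (List.isChain_map _).2 ((isChain_ternarySnake n).imp fun _ _ => adj_some_cons a)
    have hreversed : ((ternarySnake n).reverse.map (Fin.cons 2)).IsChain R :=
      (List.isChain_map _).2 <| List.isChain_reverse.2
        ((isChain_ternarySnake n).imp fun _ _ h => (adj_some_cons 2 h).symm)
    refine List.isChain_append.2 ⟨List.isChain_append.2 ⟨hblock 0, hreversed, ?_⟩, hblock 1, ?_⟩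
    · simpa [ternarySnake_getLast?, List.head?_reverse] using
        adj_some_cons_cons (x := fun _ => 1) (by decide) (by decide)
    · simpa [List.getLast?_append, ternarySnake_head?, List.getLast?_reverse] using
        adj_some_cons_cons (x := fun _ => 0) (by decide) (by decide)

open SimpleGraph.Walk in
theorem exists_isPath_mem_support_iff_ne_none (n : ℕ) :
    ∃ p : (cubeFaceGraph n).Walk (some fun _ => 0) (some fun _ => 1),
      p.IsPath ∧ ∀ v, v ∈ p.support ↔ v ≠ none := by
  have hne : (ternarySnake n).map some ≠ [] := by simp [ternarySnake_ne_nil]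
  have hhead : ((ternarySnake n).map some).head hne = some fun _ => 0 := by
    simp [List.head_eq_iff_head?_eq_some, ternarySnake_head?]
  have hlast : ((ternarySnake n).map some).getLast hne = some fun _ => 1 := by
    simp [List.getLast_eq_iff_getLast?_eq_some, ternarySnake_getLast?]
  let p := ofSupport _ hne ((List.isChain_map some).2 (isChain_ternarySnake n))
  refine ⟨p.copy hhead hlast, ?_, ?_⟩
  · rw [isPath_copy, isPath_def, support_ofSupport]
    exact (ternarySnake_nodup n).map (Option.some_injective _)
  · rintro (_ | x) <;> simp [p, mem_ternarySnake]

end cubeFaceGraph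

/-- For every `n ≥ 1`, the cover graph of the face lattice of the `n`-cube has a
Hamiltonian cycle. -/
theorem cubeFaceGraph_hamiltonian_cycle (n : ℕ) (hn : 1 ≤ n) :
    ∃ (v : Option (Fin n → Fin 3)) (c : (cubeFaceGraph n).Walk v v),
      c.IsHamiltonianCycle := by
  obtain ⟨p, hp, hsupp⟩ := cubeFaceGraph.exists_isPath_mem_support_iff_ne_none n
  have hzero : (cubeFaceGraph n).Adj none (some fun _ => 0) :=
    cubeFaceGraph.adj_none_some_iff.2 fun _ => by decide
  have hone : (cubeFaceGraph n).Adj none (some fun _ => 1) :=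
    cubeFaceGraph.adj_none_some_iff.2 fun _ => by decide
  have hends : (some fun _ : Fin n => (0 : Fin 3)) ≠ some fun _ => 1 :=
    fun h => absurd (congrFun (Option.some_injective _ h) ⟨0, hn⟩) (by decide)
  exact ⟨none, _, hp.isHamiltonianCycle_cons_concat hends hsupp hzero hone.symm⟩
end

section
/- Let π = a₁a₂…a_n be a permutation of [n]. Suppose that for some indices 1 ≤ i < j ≤ n we have {a_{i+1},…,a_{j−1}} ∩ ]m,M[ = ∅, where m = min(a_i, a_j) and M = max(a_i, a_j), and that there exists a permutation π′ of [n] with π′ ≡ π in which a_j appears to the left of a_i. Then the fence f(m, M, L) belongs to 𝓕, where L = {a₁,…,a_{i−1}} ∩ ]m,M[. -/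
/-!
Lattice congruences of the weak order on `S_n`, encoded via fences.

Permutations of `[n] = {1, …, n}` are modeled as lists of natural numbers (sequences of
values) that enumerate `Finset.Icc 1 n` without repetition.
-/

/-- A fence, encoded by its defining triple `(a, b, L)`. -/
structure Fence where
  a : ℕ
  b : ℕ
  L : Finset ℕ

/-- The triple `(a, b, L)` is a valid fence datum for `[n]`:
`1 ≤ a < b ≤ n` and `L ⊆ ]a,b[`. -/
def Fence.Valid (n : ℕ) (f : Fence) : Prop :=
  1 ≤ f.a ∧ f.a < f.b ∧ f.b ≤ n ∧ f.L ⊆ Finset.Ioo f.a f.b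

/-- The forcing order on fences: `f' ⪯ f` iff `f'.a ≤ f.a < f.b ≤ f'.b` and
`f'.L ∩ ]f.a, f.b[ = f.L`. -/
def Fence.Forces (f' f : Fence) : Prop :=
  f'.a ≤ f.a ∧ f.b ≤ f'.b ∧ f'.L ∩ Finset.Ioo f.a f.b = f.L

/-- `𝓕` is a downset of the forcing order on valid fences for `[n]`. -/
def IsFenceDownset (n : ℕ) (𝓕 : Set Fence) : Prop :=
  (∀ f ∈ 𝓕, f.Valid n) ∧
  ∀ f ∈ 𝓕, ∀ f' : Fence, f'.Valid n → f'.Forces f → f' ∈ 𝓕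

/-- The unordered pair `{π₁, π₂}` belongs to the fence `f = f(a, b, L)`: `π₂` is obtained
from `π₁` by transposing two adjacent entries equal to `a` and `b`, every element of `L`
occurs to the left of those entries, and every element of `]a,b[ ∖ L` occurs to their
right. -/
def FenceRel (f : Fence) (π₁ π₂ : List ℕ) : Prop :=
  ∃ u w : List ℕ,
    ((π₁ = u ++ f.a :: f.b :: w ∧ π₂ = u ++ f.b :: f.a :: w) ∨
     (π₁ = u ++ f.b :: f.a :: w ∧ π₂ = u ++ f.a :: f.b :: w)) ∧
    (∀ x ∈ f.L, x ∈ u) ∧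
    (∀ x ∈ Finset.Ioo f.a f.b, x ∉ f.L → x ∈ w)

/-- The equivalence relation `≡` on permutations generated by the pairs belonging to some
fence in `𝓕`. -/
def PermEquiv (𝓕 : Set Fence) : List ℕ → List ℕ → Prop :=
  Relation.EqvGen (fun π₁ π₂ => ∃ f ∈ 𝓕, FenceRel f π₁ π₂)

/-- `l` is (the list of values of) a permutation of `[n]`. -/
def IsPermList (n : ℕ) (l : List ℕ) : Prop :=
  l.Nodup ∧ ∀ x : ℕ, x ∈ l ↔ x ∈ Finset.Icc 1 n

/-- The restriction `≡*` of `≡` to permutations of `[n−1]`: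
`σ ≡* π` iff `σ·n ≡ π·n`. -/
def PermEquivStar (n : ℕ) (𝓕 : Set Fence) (σ π : List ℕ) : Prop :=
  PermEquiv 𝓕 (σ ++ [n]) (π ++ [n])

/-- `P` is an ordered set partition with ground set `S`: a list of nonempty pairwise
disjoint finsets whose union is `S`. -/
def IsOSP (S : Finset ℕ) (P : List (Finset ℕ)) : Prop :=
  (∀ B ∈ P, B.Nonempty) ∧ P.Pairwise Disjoint ∧ ∀ x : ℕ, x ∈ S ↔ ∃ B ∈ P, x ∈ B

/-- `l` is one of the permutations identified with the ordered set partition `P`: a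
concatenation of enumerations of the blocks of `P`, in order. -/
def Linearizes (l : List ℕ) (P : List (Finset ℕ)) : Prop :=
  ∃ ls : List (List ℕ), l = ls.flatten ∧
    List.Forall₂ (fun (xs : List ℕ) (B : Finset ℕ) => xs.Nodup ∧ ∀ x : ℕ, x ∈ xs ↔ x ∈ B)
      ls P

/-- Equivalence of ordered set partitions relative to an equivalence `E` on permutations:
every permutation in one is `E`-equivalent to some permutation in the other, and vice
versa. -/
def OSPEquivRel (E : List ℕ → List ℕ → Prop) (P Q : List (Finset ℕ)) : Prop :=
  (∀ l, Linearizes l P → ∃ m, Linearizes m Q ∧ E l m) ∧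
  (∀ m, Linearizes m Q → ∃ l, Linearizes l P ∧ E l m)

/-- Equivalence of ordered set partitions of `[n]` under `≡`. -/
def OSPEquiv (𝓕 : Set Fence) : List (Finset ℕ) → List (Finset ℕ) → Prop :=
  OSPEquivRel (PermEquiv 𝓕)

/-- Equivalence of ordered set partitions of `[n−1]` under the restriction `≡*`. -/
def OSPEquivStar (n : ℕ) (𝓕 : Set Fence) : List (Finset ℕ) → List (Finset ℕ) → Prop :=
  OSPEquivRel (PermEquivStar n 𝓕)

/-- `P` is stable (w.r.t. the ground set `S` and the congruence `≡` given by `𝓕`):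
every ordered set partition of `S` equivalent to `P` has at most as many blocks. -/
def StableOSP (𝓕 : Set Fence) (S : Finset ℕ) (P : List (Finset ℕ)) : Prop :=
  ∀ Q, IsOSP S Q → OSPEquiv 𝓕 P Q → Q.length ≤ P.length

/-- `P` is stable under the restriction `≡*` (as an ordered set partition of `[n−1]`). -/
def StableOSPStar (n : ℕ) (𝓕 : Set Fence) (P : List (Finset ℕ)) : Prop :=
  ∀ Q, IsOSP (Finset.Icc 1 (n - 1)) Q → OSPEquivStar n 𝓕 P Q → Q.length ≤ P.length

/-- The union of a list of blocks. -/
def blocksUnion (L : List (Finset ℕ)) : Finset ℕ := L.foldr (· ∪ ·) ∅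

/-!
Follow the chain of fence moves from `π` to `π′` and track the positions of the entries. Put
`m = min x y`, `M = max x y`. As long as `x` stands left of `y`, the entries of `]m,M[` lying in
`L` stand left of `x` and the other ones right of `y`, a move can destroy this configuration only
by swapping one of the adjacent pairs it orders: `x y`, `t x` with `t ∈ L`, or `y t` with `t ∉ L`.
Such a move belongs to a fence `f(c,d,L_f)` with `m ≤ c < d ≤ M`, and the left/right split of
`]c,d[` recorded by `L_f` is then the one recorded by `L`, so `f(m,M,L) ⪯ f(c,d,L_f)`. Since `y`
is left of `x` in `π′`, some move of the chain does destroy the configuration.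
-/

theorem Relation.EqvGen.iff_of_forall_rel_iff {α : Type*} {r : α → α → Prop} {P : α → Prop}
    (hr : ∀ a b, r a b → (P a ↔ P b)) {a b : α} (h : Relation.EqvGen r a b) : P a ↔ P b := by
  induction h with
  | rel a b hab => exact hr a b hab
  | refl => rfl
  | symm _ _ _ ih => exact ih.symm
  | trans _ _ _ _ _ ih₁ ih₂ => exact ih₁.trans ih₂

section IdxOf

variable {α : Type*} [BEq α] [LawfulBEq α]

theorem List.idxOf_append_lt_idxOf_append {s r : List α} {a b : α} (ha : a ∈ s) (hb : b ∉ s) :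
    (s ++ r).idxOf a < (s ++ r).idxOf b := by
  rw [List.idxOf_append_of_mem ha, List.idxOf_append_of_notMem hb]
  have := List.idxOf_lt_length_of_mem ha
  omega

theorem List.idxOf_append_cons_cons_swap {p q : List α} {a c d : α} (hc : a ≠ c) (hd : a ≠ d) :
    (p ++ d :: c :: q).idxOf a = (p ++ c :: d :: q).idxOf a := by
  by_cases ha : a ∈ p
  · simp only [List.idxOf_append_of_mem ha]
  · simp [List.idxOf_append_of_notMem ha, Ne.symm hc, Ne.symm hd]

theorem List.Nodup.idxOf_append_cons_cons {p q : List α} {c d : α}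
    (hnd : (p ++ c :: d :: q).Nodup) :
    (p ++ c :: d :: q).idxOf c = p.length ∧ (p ++ c :: d :: q).idxOf d = p.length + 1 := by
  obtain ⟨hc, hd, hcd⟩ : c ∉ p ∧ d ∉ p ∧ c ≠ d := by grind
  simp [List.idxOf_append_of_notMem hc, List.idxOf_append_of_notMem hd, hcd]

theorem List.Nodup.idxOf_lt_idxOf_swap_or_eq {p q : List α} {a b c d : α}
    (hnd : (p ++ c :: d :: q).Nodup)
    (h : (p ++ c :: d :: q).idxOf a < (p ++ c :: d :: q).idxOf b) :
    (p ++ d :: c :: q).idxOf a < (p ++ d :: c :: q).idxOf b ∨ a = c ∧ b = d := by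
  obtain ⟨hc₁, hd₁⟩ := hnd.idxOf_append_cons_cons
  obtain ⟨hd₂, hc₂⟩ := (hnd.perm ((List.Perm.swap d c q).append_left p)).idxOf_append_cons_cons
  have hne : ∀ {e e'}, e' ∈ p ++ c :: d :: q → e ≠ e' →
      (p ++ c :: d :: q).idxOf e ≠ (p ++ c :: d :: q).idxOf e' :=
    fun he' hne h => hne ((List.idxOf_inj he').1 h.symm).symm
  rcases eq_or_ne a c with rfl | hac
  · rcases eq_or_ne b d with rfl | hbd
    · exact .inr ⟨rfl, rfl⟩
    · have hba : b ≠ a := by rintro rfl; omega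
      have := hne (by simp) hbd
      left
      rw [hc₂, List.idxOf_append_cons_cons_swap hba hbd]
      omega
  left
  rcases eq_or_ne a d with rfl | had
  · have hbc : b ≠ c := by rintro rfl; omega
    have hba : b ≠ a := by rintro rfl; omega
    rw [hd₂, List.idxOf_append_cons_cons_swap hbc hba]
    omega
  rw [List.idxOf_append_cons_cons_swap hac had]
  rcases eq_or_ne b c with rfl | hbc
  · rw [hc₂]
    omega
  rcases eq_or_ne b d with rfl | hbd
  · have := hne (by simp) hac
    rw [hd₂]
    omega
  rwa [List.idxOf_append_cons_cons_swap hbc hbd]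

end IdxOf

def Separates (pos : ℕ → ℕ) (x y : ℕ) (L : Finset ℕ) : Prop :=
  pos x < pos y ∧ ∀ t ∈ Finset.Ioo (min x y) (max x y),
    (t ∈ L → pos t < pos x) ∧ (t ∉ L → pos y < pos t)

theorem Fence.forces_of_separates {f : Fence} {pos : ℕ → ℕ} {x y i : ℕ} {L : Finset ℕ}
    (hfL : f.L ⊆ Finset.Ioo f.a f.b) (ha : min x y ≤ f.a) (hb : f.b ≤ max x y)
    (hsep : Separates pos x y L) (hx : pos x ≤ i + 1) (hy : i ≤ pos y)
    (hleft : ∀ s ∈ f.L, pos s < i)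
    (hright : ∀ s ∈ Finset.Ioo f.a f.b, s ∉ f.L → i + 1 < pos s) :
    Fence.Forces ⟨min x y, max x y, L⟩ f := by
  have hsub : Finset.Ioo f.a f.b ⊆ Finset.Ioo (min x y) (max x y) := Finset.Ioo_subset_Ioo ha hb
  refine ⟨ha, hb, Finset.ext fun s => ⟨fun hs => ?_, fun hsf => ?_⟩⟩
  · obtain ⟨hsL, hs⟩ := Finset.mem_inter.1 hs
    by_contra hsf
    have := hright s hs hsf
    have := (hsep.2 s (hsub hs)).1 hsL
    omega
  · refine Finset.mem_inter.2 ⟨?_, hfL hsf⟩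
    by_contra hsL
    have := hleft s hsf
    have := (hsep.2 s (hsub (hfL hsf))).2 hsL
    omega

theorem separates_swap_or_forces {p q : List ℕ} {c d x y : ℕ} {L : Finset ℕ} {f : Fence}
    (hnd : (p ++ c :: d :: q).Nodup) (hcd : c = f.a ∧ d = f.b ∨ c = f.b ∧ d = f.a)
    (hfL : f.L ⊆ Finset.Ioo f.a f.b) (hleft : ∀ s ∈ f.L, s ∈ p)
    (hright : ∀ s ∈ Finset.Ioo f.a f.b, s ∉ f.L → s ∈ q)
    (hsep : Separates (List.idxOf · (p ++ c :: d :: q)) x y L) :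
    Separates (List.idxOf · (p ++ d :: c :: q)) x y L ∨
      Fence.Forces ⟨min x y, max x y, L⟩ f := by
  set σ := p ++ c :: d :: q
  by_cases hbreak : x = c ∧ y = d ∨ x = d ∧ c ∈ Finset.Ioo (min x y) (max x y) ∧ c ∈ L ∨
      y = c ∧ d ∈ Finset.Ioo (min x y) (max x y) ∧ d ∉ L
  · right
    obtain ⟨hc, hd⟩ : σ.idxOf c = p.length ∧ σ.idxOf d = p.length + 1 :=
      hnd.idxOf_append_cons_cons
    have hxy : σ.idxOf x < σ.idxOf y := hsep.1
    have hrange : min x y ≤ c ∧ c ≤ max x y ∧ min x y ≤ d ∧ d ≤ max x y := by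
      simp only [Finset.mem_Ioo] at hbreak
      omega
    have hxy_pos : σ.idxOf x ≤ p.length + 1 ∧ p.length ≤ σ.idxOf y := by
      rcases hbreak with ⟨rfl, rfl⟩ | ⟨rfl, -⟩ | ⟨rfl, -⟩ <;> omega
    refine Fence.forces_of_separates (i := p.length) hfL (by omega) (by omega) hsep hxy_pos.1
      hxy_pos.2 (fun s hs => ?_) (fun s hs hsf => ?_)
    · rw [List.idxOf_append_of_mem (hleft s hs)]
      exact List.idxOf_lt_length_of_mem (hleft s hs)
    · have hsq := hright s hs hsf
      obtain ⟨hsp, hsc, hsd⟩ : s ∉ p ∧ s ≠ c ∧ s ≠ d := by grind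
      simp [σ, List.idxOf_append_of_notMem hsp, Ne.symm hsc, Ne.symm hsd]
  · left
    simp only [not_or] at hbreak
    obtain ⟨hxy, hLx, hyL⟩ := hbreak
    refine ⟨(hnd.idxOf_lt_idxOf_swap_or_eq hsep.1).resolve_right hxy,
      fun t ht => ⟨fun htL => ?_, fun htL => ?_⟩⟩
    · refine (hnd.idxOf_lt_idxOf_swap_or_eq ((hsep.2 t ht).1 htL)).resolve_right ?_
      rintro ⟨rfl, rfl⟩
      exact hLx ⟨rfl, ht, htL⟩
    · refine (hnd.idxOf_lt_idxOf_swap_or_eq ((hsep.2 t ht).2 htL)).resolve_right ?_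
      rintro ⟨rfl, rfl⟩
      exact hyL ⟨rfl, ht, htL⟩

theorem FenceRel.symm {f : Fence} {π₁ π₂ : List ℕ} (h : FenceRel f π₁ π₂) : FenceRel f π₂ π₁ :=
  let ⟨u, w, hswap, hL, hR⟩ := h
  ⟨u, w, hswap.symm.imp And.symm And.symm, hL, hR⟩

theorem FenceRel.perm {f : Fence} {π₁ π₂ : List ℕ} (h : FenceRel f π₁ π₂) : π₁.Perm π₂ := by
  obtain ⟨u, w, ⟨rfl, rfl⟩ | ⟨rfl, rfl⟩, -, -⟩ := h <;>
    exact (List.Perm.swap _ _ _).append_left u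

theorem FenceRel.separates_or_forces {f : Fence} {π₁ π₂ : List ℕ} {x y : ℕ} {L : Finset ℕ}
    (h : FenceRel f π₁ π₂) (hfL : f.L ⊆ Finset.Ioo f.a f.b) (hnd : π₁.Nodup)
    (hsep : Separates (List.idxOf · π₁) x y L) :
    Separates (List.idxOf · π₂) x y L ∨ Fence.Forces ⟨min x y, max x y, L⟩ f := by
  obtain ⟨u, w, ⟨rfl, rfl⟩ | ⟨rfl, rfl⟩, hleft, hright⟩ := h
  · exact separates_swap_or_forces hnd (.inl ⟨rfl, rfl⟩) hfL hleft hright hsep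
  · exact separates_swap_or_forces hnd (.inr ⟨rfl, rfl⟩) hfL hleft hright hsep

theorem separates_of_eq_append {π u w z : List ℕ} {x y : ℕ} (hnd : π.Nodup)
    (hπ : π = u ++ x :: (w ++ y :: z)) (hgap : ∀ t ∈ w, ¬ (min x y < t ∧ t < max x y))
    (hmem : ∀ t ∈ Finset.Ioo (min x y) (max x y), t ∈ π) :
    Separates (List.idxOf · π) x y (u.toFinset ∩ Finset.Ioo (min x y) (max x y)) := by
  subst hπ
  refine ⟨?_, fun t ht => ⟨fun htL => ?_, fun htL => ?_⟩⟩
  · have h := List.idxOf_append_lt_idxOf_append (r := w ++ y :: z) (List.mem_append_right u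
      (List.mem_singleton_self x)) (by grind : y ∉ u ++ [x])
    simpa using h
  · have htu : t ∈ u := List.mem_toFinset.1 (Finset.mem_inter.1 htL).1
    exact List.idxOf_append_lt_idxOf_append htu (by grind : x ∉ u)
  · have htu : t ∉ u := fun h => htL (Finset.mem_inter.2 ⟨List.mem_toFinset.2 h, ht⟩)
    have htw : t ∉ w := fun h => hgap t h (Finset.mem_Ioo.1 ht)
    have hty : y ∈ u ++ x :: w ++ [y] := List.mem_append_right _ (List.mem_singleton_self y)
    have hts : t ∉ u ++ x :: w ++ [y] := by
      simp only [Finset.mem_Ioo] at ht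
      simp only [List.mem_append, List.mem_cons, List.mem_nil_iff, htu, htw, false_or, or_false]
      omega
    have h := List.idxOf_append_lt_idxOf_append (r := z) hty hts
    simpa using h

theorem not_separates_of_eq_append {π u w : List ℕ} {x y : ℕ} {L : Finset ℕ} (hnd : π.Nodup)
    (hπ : π = u ++ y :: w) (hx : x ∈ w) : ¬ Separates (List.idxOf · π) x y L := by
  subst hπ
  have h := List.idxOf_append_lt_idxOf_append (r := w) (List.mem_append_right u
      (List.mem_singleton_self y)) (by grind : x ∉ u ++ [y])
  simp only [List.append_assoc, List.singleton_append] at h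
  exact fun hsep => lt_asymm h hsep.1

/-- Lemma: if `π = u ++ x :: (w ++ y :: z)` is a permutation of `[n]` (so `x = a_i`,
`y = a_j` with `i < j`, and `w` is the segment strictly between them), no entry of `w`
lies in the open interval `]min x y, max x y[`, and some permutation `π′ ≡ π` has `y` to
the left of `x`, then the fence `f(min x y, max x y, {a₁,…,a_{i−1}} ∩ ]min x y, max x y[)`
belongs to `𝓕`. -/
theorem fence_of_inverted_pair (n : ℕ) (𝓕 : Set Fence) (hdown : IsFenceDownset n 𝓕)
    (π : List ℕ) (hπ : IsPermList n π)
    (u w z : List ℕ) (x y : ℕ) (hdecomp : π = u ++ x :: (w ++ y :: z))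
    (hgap : ∀ t ∈ w, ¬ (min x y < t ∧ t < max x y))
    (π' : List ℕ) (hπ' : IsPermList n π') (hequiv : PermEquiv 𝓕 π π')
    (hleft : ∃ u' w' : List ℕ, π' = u' ++ y :: w' ∧ x ∈ w') :
    (⟨min x y, max x y, u.toFinset ∩ Finset.Ioo (min x y) (max x y)⟩ : Fence) ∈ 𝓕 := by
  set L := u.toFinset ∩ Finset.Ioo (min x y) (max x y)
  have hmem : ∀ t, t ∈ π ↔ 1 ≤ t ∧ t ≤ n := fun t => (hπ.2 t).trans Finset.mem_Icc
  have hx := (hmem x).1 (by simp [hdecomp])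
  have hy := (hmem y).1 (by simp [hdecomp])
  have hsep : Separates (List.idxOf · π) x y L := separates_of_eq_append hπ.1 hdecomp hgap
    fun t ht => (hmem t).2 (by simp only [Finset.mem_Ioo] at ht; omega)
  have hxy : x ≠ y := by
    rintro rfl
    exact lt_irrefl _ hsep.1
  have hvalid : Fence.Valid n ⟨min x y, max x y, L⟩ :=
    ⟨le_min hx.1 hy.1, min_lt_max.2 hxy, max_le hx.2 hy.2, Finset.inter_subset_right⟩
  by_contra hnot
  have hstep : ∀ σ σ', (∃ f ∈ 𝓕, FenceRel f σ σ') →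
      σ.Nodup ∧ Separates (List.idxOf · σ) x y L → σ'.Nodup ∧ Separates (List.idxOf · σ') x y L :=
    fun σ σ' ⟨f, hf, hrel⟩ ⟨hnd, hsepσ⟩ => ⟨hrel.perm.nodup_iff.1 hnd,
      (hrel.separates_or_forces (hdown.1 f hf).2.2.2 hnd hsepσ).resolve_right
        fun h => hnot (hdown.2 f hf _ hvalid h)⟩
  have hsep' := (hequiv.iff_of_forall_rel_iff fun σ σ' h =>
    ⟨hstep σ σ' h, hstep σ' σ (h.imp fun _ => And.imp_right FenceRel.symm)⟩).1 ⟨hπ.1, hsep⟩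
  obtain ⟨u', w', hπ'eq, hxw⟩ := hleft
  exact not_separates_of_eq_append hπ'.1 hπ'eq hxw hsep'.2
end

section
/- For every n ≥ 2, writing P_n = (x₁,…,x_N), the sequence P_n contains every ordered set partition of [n] exactly once; any two consecutive entries of P_n differ in merging two consecutive blocks into one or splitting one block into two consecutive blocks; the first and last entries of P_n are ordered set partitions into n singleton blocks; and for all i ∈ [N], if x_i = A₁|A₂|…|A_k then x_{N+1−i} = A_k|…|A₂|A₁, i.e., x_{N+1−i} is obtained from x_i by reversing the order of its blocks. -/
/-- `Q` is obtained from `P` by merging two consecutive blocks into one (equivalently,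
`P` is obtained from `Q` by splitting one block into two consecutive blocks). -/
def MergeStep (P Q : List (Finset ℕ)) : Prop :=
  ∃ (L : List (Finset ℕ)) (A B : Finset ℕ) (R : List (Finset ℕ)),
    P = L ++ A :: B :: R ∧ Q = L ++ (A ∪ B) :: R

/-- The sequence `c⃗(x) = (č₀(x), ĉ₁(x), č₁(x), ĉ₂(x), č₂(x), …, ĉ_k(x), č_k(x))`
of ordered set partitions obtained from `x` by inserting the new element `nv` as a
singleton block between two blocks or joining it with an existing block, alternatingly
from left to right. -/
def cvec (nv : ℕ) : List (Finset ℕ) → List (List (Finset ℕ))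
  | [] => [[({nv} : Finset ℕ)]]
  | B :: r =>
      (({nv} : Finset ℕ) :: B :: r) :: (insert nv B :: r) ::
        (cvec nv r).map (fun P => B :: P)

/-- The zigzag sequence `P_n` of ordered set partitions of `[n]`:
`P₂ = (1|2, 12, 2|1)` and
`P_{n+1} = (c⃖(x₁), c⃗(x₂), c⃖(x₃), c⃗(x₄), …, c⃖(x_N))` where `P_n = (x₁, …, x_N)`
and `c⃖(x)` denotes the reversal of `c⃗(x)`. -/
def Pseq : ℕ → List (List (Finset ℕ))
  | 0 => []
  | 1 => []
  | 2 => [[{1}, {2}], [({1, 2} : Finset ℕ)], [{2}, {1}]]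
  | m + 3 =>
      (((Pseq (m + 2)).mapIdx fun i x =>
          if i % 2 = 0 then (cvec (m + 3) x).reverse else cvec (m + 3) x)).flatten

open Relation

theorem List.getElem_length_sub_one_sub_of_reverse_eq_map {α : Type*} {l : List α} {f : α → α}
    (h : l.reverse = l.map f) {i : ℕ} (hi : i < l.length) : l[l.length - 1 - i] = f l[i] := by
  have := List.getElem_of_eq h (i := i) (by simpa using hi)
  rwa [List.getElem_reverse, List.getElem_map] at this

section OSP

theorem isOSP_nil_iff {S : Finset ℕ} : IsOSP S [] ↔ S = ∅ := by
  simp [IsOSP, Finset.eq_empty_iff_forall_notMem]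

theorem isOSP_cons_iff {S B : Finset ℕ} {r : List (Finset ℕ)} :
    IsOSP S (B :: r) ↔ B.Nonempty ∧ B ⊆ S ∧ IsOSP (S \ B) r := by
  simp only [IsOSP, List.pairwise_cons, List.mem_cons, or_imp, forall_and, forall_eq,
    exists_eq_or_imp]
  constructor
  · rintro ⟨⟨hB, hr⟩, ⟨hdisj, hpw⟩, hmem⟩
    refine ⟨hB, fun a ha => (hmem a).2 (.inl ha), hr, hpw, fun a => ?_⟩
    rw [Finset.mem_sdiff, hmem]
    constructor
    · rintro ⟨h | h, haB⟩
      exacts [absurd h haB, h]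
    · rintro ⟨C, hC, haC⟩
      exact ⟨.inr ⟨C, hC, haC⟩, fun haB => Finset.disjoint_left.1 (hdisj C hC) haB haC⟩
  · rintro ⟨hB, hBS, hr, hpw, hmem⟩
    refine ⟨⟨hB, hr⟩, ⟨fun C hC => ?_, hpw⟩, fun a => ?_⟩
    · exact Finset.disjoint_of_subset_right (fun a ha => (hmem a).2 ⟨C, hC, ha⟩)
        Finset.disjoint_sdiff
    · rw [← hmem, Finset.mem_sdiff]
      by_cases haB : a ∈ B
      · simp [haB, hBS haB]
      · simp [haB]

theorem IsOSP.notMem {S : Finset ℕ} {x : List (Finset ℕ)} (hx : IsOSP S x) {a : ℕ}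
    (ha : a ∉ S) : ∀ B ∈ x, a ∉ B :=
  fun B hB haB => ha ((hx.2.2 a).2 ⟨B, hB, haB⟩)

theorem isOSP_empty_iff {Q : List (Finset ℕ)} : IsOSP ∅ Q ↔ Q = [] := by
  cases Q with
  | nil => simp [isOSP_nil_iff]
  | cons B r =>
    simp only [isOSP_cons_iff, reduceCtorEq, iff_false, not_and]
    intro hB hB0
    simpa using hB.mono hB0

end OSP

section MergeStep

theorem MergeStep.cons {P Q : List (Finset ℕ)} (B : Finset ℕ) (h : MergeStep P Q) :
    MergeStep (B :: P) (B :: Q) := by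
  obtain ⟨L, A, C, R, rfl, rfl⟩ := h
  exact ⟨B :: L, A, C, R, rfl, rfl⟩

theorem MergeStep.append {P Q : List (Finset ℕ)} (B : Finset ℕ) (h : MergeStep P Q) :
    MergeStep (P ++ [B]) (Q ++ [B]) := by
  obtain ⟨L, A, C, R, rfl, rfl⟩ := h
  exact ⟨L, A, C, R ++ [B], by simp, by simp⟩

end MergeStep

section Cvec

variable (nv : ℕ)

theorem length_cvec (x : List (Finset ℕ)) : (cvec nv x).length = 2 * x.length + 1 := by
  induction x with
  | nil => rfl
  | cons B r ih => simp only [cvec, List.length_cons, List.length_map, ih]; ring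

theorem head?_cvec (x : List (Finset ℕ)) : (cvec nv x).head? = some ({nv} :: x) := by
  cases x <;> rfl

theorem getLast?_cvec (x : List (Finset ℕ)) : (cvec nv x).getLast? = some (x ++ [{nv}]) := by
  induction x with
  | nil => rfl
  | cons B r ih =>
    obtain ⟨c, cs, hc⟩ : ∃ c cs, cvec nv r = c :: cs := by
      cases r <;> exact ⟨_, _, rfl⟩
    rw [cvec, hc, List.map_cons, List.getLast?_cons_cons, List.getLast?_cons_cons,
      ← List.map_cons, ← hc, List.getLast?_map, ih]
    rfl

theorem isChain_cvec (x : List (Finset ℕ)) :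
    (cvec nv x).IsChain (SymmGen MergeStep) := by
  induction x with
  | nil => exact List.isChain_singleton _
  | cons B r ih =>
    obtain ⟨cs, hc⟩ : ∃ cs, cvec nv r = ({nv} :: r) :: cs :=
      List.head?_eq_some_iff.1 (head?_cvec nv r)
    rw [cvec, hc, List.map_cons]
    refine .cons_cons (.of_rel ⟨[], {nv}, B, r, rfl, ?_⟩)
      (.cons_cons (.of_rel_symm ⟨[], B, {nv}, r, rfl, ?_⟩) ?_)
    · rw [Finset.insert_eq]; rfl
    · rw [Finset.insert_eq, Finset.union_comm]; rfl
    · have := (List.isChain_map (R := SymmGen MergeStep) (B :: ·)).2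
        (ih.imp fun _ _ h => h.imp (MergeStep.cons B) (MergeStep.cons B))
      rwa [hc, List.map_cons] at this

theorem cvec_append_singleton (y : List (Finset ℕ)) (B : Finset ℕ) :
    cvec nv (y ++ [B]) =
      (cvec nv y).map (· ++ [B]) ++ [y ++ [insert nv B], y ++ [B, {nv}]] := by
  induction y with
  | nil => simp [cvec]
  | cons C s ih =>
    rw [List.cons_append, cvec, cvec, ih]
    simp [List.map_map, Function.comp_def]

theorem reverse_cvec_reverse (x : List (Finset ℕ)) :
    (cvec nv x.reverse).reverse = (cvec nv x).map List.reverse := by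
  induction x with
  | nil => simp [cvec]
  | cons B r ih =>
    rw [List.reverse_cons, cvec_append_singleton, cvec]
    simp only [List.map_cons, List.reverse_append, List.reverse_cons, List.map_map]
    rw [← List.map_reverse, ih]
    simp [List.map_map, Function.comp_def]

variable {nv}

theorem isOSP_of_mem_cvec {S : Finset ℕ} {x : List (Finset ℕ)} (hx : IsOSP S x) (hnv : nv ∉ S) :
    ∀ Q ∈ cvec nv x, IsOSP (insert nv S) Q := by
  induction x generalizing S with
  | nil =>
    obtain rfl := isOSP_nil_iff.1 hx
    simp [cvec, isOSP_cons_iff, isOSP_nil_iff]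
  | cons B r ih =>
    obtain ⟨hB, hBS, hr⟩ := isOSP_cons_iff.1 hx
    have hBnv : nv ∉ B := fun h => hnv (hBS h)
    simp only [cvec, List.mem_cons, List.mem_map, forall_eq_or_imp, forall_exists_index, and_imp,
      forall_apply_eq_imp_iff₂]
    refine ⟨?_, ?_, fun P hP => ?_⟩
    · rw [isOSP_cons_iff, Finset.sdiff_singleton_eq_erase, Finset.erase_insert hnv]
      exact ⟨Finset.singleton_nonempty nv, by simp, hx⟩
    · rw [isOSP_cons_iff, Finset.insert_sdiff_insert, Finset.sdiff_insert_of_notMem hnv]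
      exact ⟨Finset.insert_nonempty nv B, Finset.insert_subset_insert nv hBS, hr⟩
    · rw [isOSP_cons_iff, Finset.insert_sdiff_of_notMem _ hBnv]
      exact ⟨hB, hBS.trans (Finset.subset_insert nv S),
        ih hr (fun h => hnv (Finset.mem_sdiff.1 h).1) P hP⟩

theorem nodup_cvec {S : Finset ℕ} {x : List (Finset ℕ)} (hx : IsOSP S x)
    (hnv : nv ∉ S) : (cvec nv x).Nodup := by
  induction x generalizing S with
  | nil => simp [cvec]
  | cons B r ih =>
    obtain ⟨-, hBS, hr⟩ := isOSP_cons_iff.1 hx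
    have hBnv : nv ∉ B := fun h => hnv (hBS h)
    have hne : ∀ C P Q, nv ∈ C → B :: P ≠ C :: Q := fun C P Q hC h =>
      hBnv ((List.cons.inj h).1 ▸ hC)
    simp only [cvec, List.nodup_cons, List.mem_cons, List.mem_map, not_or, not_exists, not_and]
    refine ⟨⟨fun h => by simpa using congrArg List.length h,
        fun P _ => hne _ P _ (Finset.mem_singleton_self nv)⟩,
      fun P _ => hne _ P r (Finset.mem_insert_self nv B),
      (List.nodup_map_iff List.cons_injective).2 (ih hr fun h => hnv (Finset.mem_sdiff.1 h).1)⟩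

end Cvec

section Delete

def deleteElem (nv : ℕ) (Q : List (Finset ℕ)) : List (Finset ℕ) :=
  (Q.map (·.erase nv)).filter (· ≠ ∅)

variable {nv : ℕ}

theorem deleteElem_cons (B : Finset ℕ) (Q : List (Finset ℕ)) :
    deleteElem nv (B :: Q) =
      if B.erase nv = ∅ then deleteElem nv Q else B.erase nv :: deleteElem nv Q := by
  simp only [deleteElem, List.map_cons, List.filter_cons]
  split_ifs <;> simp_all

theorem deleteElem_eq_self {S : Finset ℕ} {x : List (Finset ℕ)} (hx : IsOSP S x) (hnv : nv ∉ S) :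
    deleteElem nv x = x := by
  have herase : x.map (·.erase nv) = x :=
    (List.map_congr_left fun B hB => Finset.erase_eq_of_notMem (hx.notMem hnv B hB)).trans
      (List.map_id' x)
  rw [deleteElem, herase, List.filter_eq_self]
  simpa [← Finset.nonempty_iff_ne_empty] using hx.1

theorem deleteElem_of_mem_cvec {S : Finset ℕ} {x : List (Finset ℕ)} (hx : IsOSP S x)
    (hnv : nv ∉ S) : ∀ Q ∈ cvec nv x, deleteElem nv Q = x := by
  induction x generalizing S with
  | nil => simp [cvec, deleteElem]
  | cons B r ih =>
    obtain ⟨hB, hBS, hr⟩ := isOSP_cons_iff.1 hx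
    have hBnv : nv ∉ B := fun h => hnv (hBS h)
    have hrnv : nv ∉ S \ B := fun h => hnv (Finset.mem_sdiff.1 h).1
    simp only [cvec, List.mem_cons, List.mem_map, forall_eq_or_imp, forall_exists_index, and_imp,
      forall_apply_eq_imp_iff₂, deleteElem_cons, Finset.erase_insert hBnv,
      Finset.erase_eq_of_notMem hBnv, if_neg hB.ne_empty]
    exact ⟨by rw [Finset.erase_singleton, if_pos rfl, deleteElem_eq_self hr hrnv],
      by rw [deleteElem_eq_self hr hrnv], fun P hP => by rw [ih hr hrnv P hP]⟩

theorem isOSP_deleteElem {T : Finset ℕ} {Q : List (Finset ℕ)} (hQ : IsOSP T Q) :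
    IsOSP (T.erase nv) (deleteElem nv Q) := by
  induction Q generalizing T with
  | nil => simp [deleteElem, isOSP_nil_iff.1 hQ, isOSP_nil_iff]
  | cons B r ih =>
    obtain ⟨hB, hBT, hr⟩ := isOSP_cons_iff.1 hQ
    have hrec := ih hr
    rw [deleteElem_cons]
    split_ifs with hBnv
    · obtain rfl : B = {nv} := ((Finset.erase_eq_empty_iff B nv).1 hBnv).resolve_left hB.ne_empty
      simpa [Finset.sdiff_singleton_eq_erase] using hrec
    · refine isOSP_cons_iff.2 ⟨Finset.nonempty_iff_ne_empty.2 hBnv,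
        Finset.erase_subset_erase nv hBT, ?_⟩
      convert hrec using 1
      ext a
      simp only [Finset.mem_sdiff, Finset.mem_erase]
      tauto

theorem mem_cvec_deleteElem {T : Finset ℕ} {Q : List (Finset ℕ)} (hQ : IsOSP T Q)
    (hnv : nv ∈ T) : Q ∈ cvec nv (deleteElem nv Q) := by
  induction Q generalizing T with
  | nil => simp [isOSP_nil_iff.1 hQ] at hnv
  | cons B r ih =>
    obtain ⟨hB, hBT, hr⟩ := isOSP_cons_iff.1 hQ
    rw [deleteElem_cons]
    by_cases hnvB : nv ∈ B
    · have hrnv : nv ∉ T \ B := fun h => (Finset.mem_sdiff.1 h).2 hnvB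
      rw [deleteElem_eq_self hr hrnv]
      split_ifs with hBnv
      · obtain rfl : B = {nv} := ((Finset.erase_eq_empty_iff B nv).1 hBnv).resolve_left hB.ne_empty
        exact List.mem_of_mem_head? (head?_cvec nv r)
      · simp [cvec, Finset.insert_erase hnvB]
    · have hBerase : B.erase nv ≠ ∅ := by
        rw [Finset.erase_eq_of_notMem hnvB]; exact hB.ne_empty
      rw [if_neg hBerase, Finset.erase_eq_of_notMem hnvB, cvec]
      exact List.mem_cons_of_mem _ (List.mem_cons_of_mem _
        (List.mem_map_of_mem (ih hr (Finset.mem_sdiff.2 ⟨hnv, hnvB⟩))))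

end Delete

section CvecAlt

/-- The run contributed by the `i`-th entry (counting from `0`) of `P_n` to `P_{n+1}`. -/
def cvecAlt (nv i : ℕ) (x : List (Finset ℕ)) : List (List (Finset ℕ)) :=
  if i % 2 = 0 then (cvec nv x).reverse else cvec nv x

variable {nv : ℕ}

theorem mem_cvecAlt {i : ℕ} {x Q : List (Finset ℕ)} : Q ∈ cvecAlt nv i x ↔ Q ∈ cvec nv x := by
  unfold cvecAlt; split_ifs <;> simp

theorem length_cvecAlt (i : ℕ) (x : List (Finset ℕ)) :
    (cvecAlt nv i x).length = 2 * x.length + 1 := by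
  unfold cvecAlt; split_ifs <;> simp [length_cvec]

theorem nodup_cvecAlt {i : ℕ} {x : List (Finset ℕ)} (h : (cvec nv x).Nodup) :
    (cvecAlt nv i x).Nodup := by
  unfold cvecAlt; split_ifs <;> simpa

theorem isChain_cvecAlt (i : ℕ) (x : List (Finset ℕ)) :
    (cvecAlt nv i x).IsChain (SymmGen MergeStep) := by
  unfold cvecAlt; split_ifs
  · exact List.isChain_reverse.2 ((isChain_cvec nv x).imp fun _ _ => SymmGen.symm)
  · exact isChain_cvec nv x

theorem head?_cvecAlt (i : ℕ) (x : List (Finset ℕ)) :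
    (cvecAlt nv i x).head? = some (if i % 2 = 0 then x ++ [{nv}] else {nv} :: x) := by
  unfold cvecAlt; split_ifs
  · rw [List.head?_reverse, getLast?_cvec]
  · rw [head?_cvec]

theorem getLast?_cvecAlt (i : ℕ) (x : List (Finset ℕ)) :
    (cvecAlt nv i x).getLast? = (cvecAlt nv (i + 1) x).head? := by
  rw [head?_cvecAlt]
  by_cases hi : i % 2 = 0
  · rw [cvecAlt, if_pos hi, List.getLast?_reverse, head?_cvec, if_neg (by omega)]
  · rw [cvecAlt, if_neg hi, getLast?_cvec, if_pos (by omega)]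

theorem cvecAlt_congr {i j : ℕ} (h : i % 2 = j % 2) : cvecAlt nv i = cvecAlt nv j := by
  unfold cvecAlt; rw [h]

theorem reverse_cvecAlt_reverse (i : ℕ) (x : List (Finset ℕ)) :
    (cvecAlt nv i x.reverse).reverse = (cvecAlt nv i x).map List.reverse := by
  unfold cvecAlt; split_ifs
  · rw [List.reverse_reverse, List.map_reverse, ← reverse_cvec_reverse, List.reverse_reverse]
  · rw [reverse_cvec_reverse]

theorem symmGen_head?_cvecAlt {x y : List (Finset ℕ)} (h : SymmGen MergeStep x y)
    (i : ℕ) : ∀ a ∈ (cvecAlt nv i x).head?, ∀ b ∈ (cvecAlt nv i y).head?,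
      SymmGen MergeStep a b := by
  simp only [head?_cvecAlt, Option.mem_def, Option.some.injEq, forall_eq']
  split_ifs
  · exact h.imp (MergeStep.append _) (MergeStep.append _)
  · exact h.imp (MergeStep.cons _) (MergeStep.cons _)

end CvecAlt

section Zig

def zig (nv : ℕ) (xs : List (List (Finset ℕ))) : List (List (Finset ℕ)) :=
  (xs.mapIdx (cvecAlt nv)).flatten

variable {nv : ℕ} {xs : List (List (Finset ℕ))}

theorem mem_zig {Q : List (Finset ℕ)} : Q ∈ zig nv xs ↔ ∃ x ∈ xs, Q ∈ cvec nv x := by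
  simp only [zig, List.mem_flatten, List.mem_mapIdx]
  constructor
  · rintro ⟨_, ⟨i, hi, rfl⟩, hQ⟩
    exact ⟨xs[i], List.getElem_mem hi, mem_cvecAlt.1 hQ⟩
  · rintro ⟨x, hx, hQ⟩
    obtain ⟨i, hi, rfl⟩ := List.getElem_of_mem hx
    exact ⟨_, ⟨i, hi, rfl⟩, mem_cvecAlt.2 hQ⟩

theorem mem_zig_iff_isOSP {S : Finset ℕ} (hxs : ∀ x, x ∈ xs ↔ IsOSP S x) (hnv : nv ∉ S)
    {Q : List (Finset ℕ)} : Q ∈ zig nv xs ↔ IsOSP (insert nv S) Q := by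
  rw [mem_zig]
  constructor
  · rintro ⟨x, hx, hQ⟩
    exact isOSP_of_mem_cvec ((hxs x).1 hx) hnv Q hQ
  · intro hQ
    refine ⟨deleteElem nv Q, (hxs _).2 ?_, mem_cvec_deleteElem hQ (Finset.mem_insert_self nv S)⟩
    simpa [Finset.erase_insert hnv] using isOSP_deleteElem (nv := nv) hQ

theorem nodup_zig {S : Finset ℕ} (hxs : ∀ x ∈ xs, IsOSP S x) (hnv : nv ∉ S) (hnd : xs.Nodup) :
    (zig nv xs).Nodup := by
  rw [zig, List.nodup_flatten]
  constructor
  · simp only [List.mem_mapIdx]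
    rintro _ ⟨i, hi, rfl⟩
    exact nodup_cvecAlt (nodup_cvec (hxs _ (List.getElem_mem hi)) hnv)
  · rw [List.pairwise_iff_getElem]
    intro i j hi hj hij Q hQi hQj
    simp only [List.length_mapIdx, List.getElem_mapIdx, mem_cvecAlt] at hi hj hQi hQj
    have hdel := (deleteElem_of_mem_cvec (hxs _ (List.getElem_mem hi)) hnv Q hQi).symm.trans
      (deleteElem_of_mem_cvec (hxs _ (List.getElem_mem hj)) hnv Q hQj)
    exact List.pairwise_iff_getElem.1 hnd i j hi hj hij hdel

theorem isChain_zig (hch : xs.IsChain (SymmGen MergeStep)) :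
    (zig nv xs).IsChain (SymmGen MergeStep) := by
  have hnil : [] ∉ xs.mapIdx (cvecAlt nv) := by
    simp only [List.mem_mapIdx, not_exists]
    intro i _ h
    simpa [length_cvecAlt] using congrArg List.length h
  rw [zig, List.isChain_flatten hnil]
  refine ⟨?_, List.isChain_iff_getElem.2 fun i hi => ?_⟩
  · simp only [List.mem_mapIdx]
    rintro _ ⟨i, hi, rfl⟩
    exact isChain_cvecAlt i _
  · simp only [List.length_mapIdx] at hi
    simp only [List.getElem_mapIdx, getLast?_cvecAlt]
    exact symmGen_head?_cvecAlt (List.isChain_iff_getElem.1 hch i hi) (i + 1)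

theorem head?_zig : (zig nv xs).head? = xs.head?.map (· ++ [{nv}]) := by
  cases xs with
  | nil => rfl
  | cons x xs =>
    rw [zig, List.mapIdx_cons, List.flatten_cons, List.head?_append, head?_cvecAlt]
    rfl

theorem length_zig : (zig nv xs).length = 2 * (xs.map List.length).sum + xs.length := by
  have hlen : (xs.mapIdx (cvecAlt nv)).map List.length = xs.map (2 * ·.length + 1) := by
    apply List.ext_getElem <;> simp [length_cvecAlt]
  rw [zig, List.length_flatten, hlen, List.sum_map_add, List.sum_map_mul_left]
  simp

theorem reverse_zig (hodd : Odd xs.length) (hrev : xs.reverse = xs.map List.reverse) :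
    (zig nv xs).reverse = (zig nv xs).map List.reverse := by
  rw [zig, List.reverse_flatten, List.map_flatten]
  congr 1
  refine List.ext_getElem (by simp) fun i _ hi => ?_
  simp only [List.length_map, List.length_mapIdx] at hi
  have hparity : (xs.length - 1 - i) % 2 = i % 2 := by
    obtain ⟨k, hk⟩ := hodd
    omega
  simp only [List.getElem_reverse, List.getElem_map, List.getElem_mapIdx, List.length_map,
    List.length_mapIdx]
  rw [List.getElem_length_sub_one_sub_of_reverse_eq_map hrev hi, cvecAlt_congr hparity,
    reverse_cvecAlt_reverse]

end Zig

section Zigzag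

/-- The recursion of `Pseq` started from `P₀ = (∅)`, which makes every `n` a regular case. -/
def zigzag : ℕ → List (List (Finset ℕ))
  | 0 => [[]]
  | n + 1 => zig (n + 1) (zigzag n)

theorem Pseq_eq_zigzag : ∀ n, 2 ≤ n → Pseq n = zigzag n
  | 2, _ => by decide
  | m + 3, _ => by rw [Pseq, zigzag, ← Pseq_eq_zigzag (m + 2) (by omega)]; rfl

theorem mem_zigzag_iff (n : ℕ) {Q : List (Finset ℕ)} :
    Q ∈ zigzag n ↔ IsOSP (Finset.Icc 1 n) Q := by
  induction n generalizing Q with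
  | zero => simp [zigzag, isOSP_empty_iff]
  | succ n ih =>
    rw [zigzag, mem_zig_iff_isOSP (fun x => ih) (by simp),
      Finset.insert_Icc_right_eq_Icc_add_one (by omega)]

theorem nodup_zigzag (n : ℕ) : (zigzag n).Nodup := by
  induction n with
  | zero => simp [zigzag]
  | succ n ih => exact nodup_zig (fun x => (mem_zigzag_iff n).1) (by simp) ih

theorem isChain_zigzag (n : ℕ) : (zigzag n).IsChain (SymmGen MergeStep) := by
  induction n with
  | zero => exact List.isChain_singleton _
  | succ n ih => exact isChain_zig ih

theorem head?_zigzag (n : ℕ) :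
    (zigzag n).head? = some ((List.range' 1 n).map ({·})) := by
  induction n with
  | zero => rfl
  | succ n ih => rw [zigzag, head?_zig, ih, List.range'_concat]; simp [Nat.add_comm]

theorem odd_length_zigzag (n : ℕ) : Odd (zigzag n).length := by
  induction n with
  | zero => simp [zigzag]
  | succ n ih => rw [zigzag, length_zig]; exact (even_two_mul _).add_odd ih

theorem reverse_zigzag (n : ℕ) : (zigzag n).reverse = (zigzag n).map List.reverse := by
  induction n with
  | zero => rfl
  | succ n ih => exact reverse_zig (odd_length_zigzag n) ih

theorem getLast?_zigzag (n : ℕ) :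
    (zigzag n).getLast? = some ((List.range' 1 n).map ({·})).reverse := by
  rw [← List.head?_reverse, reverse_zigzag, List.head?_map, head?_zigzag]
  rfl

end Zigzag

/-- For every `n ≥ 2`, the sequence `P_n` contains every ordered set partition of `[n]`
exactly once; consecutive entries differ in merging two consecutive blocks or splitting
one block into two; the first and last entries are partitions into `n` singleton blocks;
and the entry at position `N+1−i` is obtained from the entry at position `i` by
reversing the order of its blocks. -/
theorem Pseq_properties (n : ℕ) (hn : 2 ≤ n) :
    (∀ Q ∈ Pseq n, IsOSP (Finset.Icc 1 n) Q) ∧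
    (∀ Q : List (Finset ℕ), IsOSP (Finset.Icc 1 n) Q → Q ∈ Pseq n) ∧
    (Pseq n).Nodup ∧
    List.Chain' (fun P Q => MergeStep P Q ∨ MergeStep Q P) (Pseq n) ∧
    (∃ x, (Pseq n).head? = some x ∧ ∀ B ∈ x, B.card = 1) ∧
    (∃ x, (Pseq n).getLast? = some x ∧ ∀ B ∈ x, B.card = 1) ∧
    (∀ i < (Pseq n).length,
      (Pseq n).getD ((Pseq n).length - 1 - i) [] = ((Pseq n).getD i []).reverse) := by
  have hsingletons : ∀ B ∈ (List.range' 1 n).map fun i => ({i} : Finset ℕ), B.card = 1 := by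
    simp only [List.forall_mem_map, Finset.card_singleton, implies_true]
  rw [Pseq_eq_zigzag n hn]
  refine ⟨fun Q => (mem_zigzag_iff n).1, fun Q => (mem_zigzag_iff n).2, nodup_zigzag n,
    isChain_zigzag n, ⟨_, head?_zigzag n, hsingletons⟩,
    ⟨_, getLast?_zigzag n, fun B hB => hsingletons B (List.mem_reverse.1 hB)⟩, fun i hi => ?_⟩
  rw [List.getD_eq_getElem _ _ (by omega), List.getD_eq_getElem _ _ hi,
    List.getElem_length_sub_one_sub_of_reverse_eq_map (reverse_zigzag n) hi]
end
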